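/- arXiv:1007.0033 — 5 statements merged into one kernel-verified Lean document; each statement's English description precedes it below -/
import Mathlib

section
/- Let {f_i : S_i → Obj(𝒞)}_{i ∈ I} be a collection of objects of 𝒞^{S₀} such that the sets S_i are pairwise disjoint subsets of S₀. Let f : ∐_{i∈I} S_i → Obj(𝒞) be the function with f|_{S_i} = f_i, and for each k let J_k : f_k → f be the morphism J_k(x,y) = δ_{x,y} id_{f_k(x)}. Then (f, (J_k)) is the coproduct of the family {f_i} in 𝒞^{S₀}: for every object g and every family of morphisms T_i : f_i → g there is a unique morphism T : f → g with T ∘ J_k = T_k for all k. -/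
open CategoryTheory

open scoped Classical
namespace CS

/-! The inclusion `J i` is the identity matrix on the rows and columns indexed by `(objs i).dom`
and zero elsewhere, so `T ∘ J i` is the block of rows of `T` indexed by `(objs i).dom`. As these
sets partition `f.dom`, a morphism out of `f` is the same as a family of such blocks, and the
finiteness condition on a row of `T` is the one on the corresponding row of some `T i`. -/

universe u v

variable {S₀ : Type} {C : Type u} [Category.{v} C]

structure CObj (S₀ : Type) (C : Type u) [Category.{v} C] where
  dom : Set S₀
  val : dom → C

variable [Preadditive C]

abbrev Mor (f g : CObj S₀ C) : Type v :=
  ∀ (x : f.dom) (y : g.dom), f.val x ⟶ g.val y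

/-- condition (ii) of the definition of morphisms in `𝒞^{S₀}` -/
def FinCond {f g : CObj S₀ C} (F : Mor f g) : Prop :=
  g.dom.Infinite → ∀ x : f.dom, {y : g.dom | F x y ≠ 0}.Finite

noncomputable def mcomp {f g h : CObj S₀ C} (G : Mor g h) (F : Mor f g) : Mor f h :=
  fun x y => ∑ᶠ z : g.dom, F x z ≫ G z y

noncomputable def mid (f : CObj S₀ C) : Mor f f :=
  fun x y =>
    if h : (x : S₀) = (y : S₀) then eqToHom (congrArg f.val (Subtype.ext h)) else 0

end CS
namespace CS

/-! The inclusion `J i` is the identity matrix on the rows and columns indexed by `(objs i).dom`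
and zero elsewhere, so `T ∘ J i` is the block of rows of `T` indexed by `(objs i).dom`. As these
sets partition `f.dom`, a morphism out of `f` is the same as a family of such blocks, and the
finiteness condition on a row of `T` is the one on the corresponding row of some `T i`. -/

universe u v

section Coproduct

variable {S₀ : Type} {C : Type u} [Category.{v} C] {ι : Type} {objs : ι → CObj S₀ C}
  {f g h : CObj S₀ C}
  (hval : ∀ (i : ι) (x : (objs i).dom) (hx : (x : S₀) ∈ f.dom),
    f.val ⟨(x : S₀), hx⟩ = (objs i).val x)

/-- A summand containing each point is chosen; by `copair_apply` the choice does not matter when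
the summands are disjoint. -/
noncomputable def copair (hdom : f.dom ⊆ ⋃ i, (objs i).dom) (T : ∀ i, Mor (objs i) g) :
    Mor f g := fun x y =>
  have hx := Set.mem_iUnion.mp (hdom x.2)
  eqToHom (hval hx.choose ⟨x, hx.choose_spec⟩ x.2) ≫ T hx.choose ⟨x, hx.choose_spec⟩ y

lemma copair_apply (hdisj : ∀ i j : ι, i ≠ j → Disjoint (objs i).dom (objs j).dom)
    (hdom : f.dom ⊆ ⋃ i, (objs i).dom) (T : ∀ i, Mor (objs i) g)
    (i : ι) (s : S₀) (hsi : s ∈ (objs i).dom) (hs : s ∈ f.dom) (y : g.dom) :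
    copair hval hdom T ⟨s, hs⟩ y = eqToHom (hval i ⟨s, hsi⟩ hs) ≫ T i ⟨s, hsi⟩ y := by
  have of_index_eq : ∀ j (hsj : s ∈ (objs j).dom), j = i →
      eqToHom (hval j ⟨s, hsj⟩ hs) ≫ T j ⟨s, hsj⟩ y
        = eqToHom (hval i ⟨s, hsi⟩ hs) ≫ T i ⟨s, hsi⟩ y := by
    rintro j hsj rfl
    rfl
  refine of_index_eq _ _ (by_contra fun hne => ?_)
  exact Set.disjoint_left.mp (hdisj _ i hne) (Set.mem_iUnion.mp (hdom hs)).choose_spec hsi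

variable [Preadditive C]

lemma finCond_copair (hdom : f.dom ⊆ ⋃ i, (objs i).dom) {T : ∀ i, Mor (objs i) g}
    (hT : ∀ i, FinCond (T i)) : FinCond (copair hval hdom T) := by
  intro hinf x
  have hx := Set.mem_iUnion.mp (hdom x.2)
  refine (hT hx.choose hinf ⟨x, hx.choose_spec⟩).subset fun y hy h0 => hy ?_
  simp only [copair, h0, Limits.comp_zero]

omit hval in
lemma mcomp_apply_of_offDiag_eq_zero {F : Mor f g}
    (hF : ∀ (x : f.dom) (z : g.dom), (x : S₀) ≠ z → F x z = 0)
    (G : Mor g h) (x : f.dom) (hx : (x : S₀) ∈ g.dom) (y : h.dom) :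
    mcomp G F x y = F x ⟨x, hx⟩ ≫ G ⟨x, hx⟩ y := by
  refine finsum_eq_single (fun z => F x z ≫ G z y) _ fun z hz => ?_
  rw [hF x z fun hxz => hz (Subtype.ext hxz.symm), Limits.zero_comp]

variable {J : ∀ i, Mor (objs i) f}
  (hJ_offDiag : ∀ i (x : (objs i).dom) (z : f.dom), (x : S₀) ≠ z → J i x z = 0)
  (hJ_diag : ∀ i x hx, J i x ⟨x, hx⟩ = eqToHom (hval i x hx).symm)
include hJ_offDiag hJ_diag

lemma mcomp_copair (hdisj : ∀ i j : ι, i ≠ j → Disjoint (objs i).dom (objs j).dom)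
    (hdom : f.dom = ⋃ i, (objs i).dom) (T : ∀ i, Mor (objs i) g) (i : ι) :
    mcomp (copair hval hdom.subset T) (J i) = T i := by
  funext x y
  have hx : (x : S₀) ∈ f.dom := hdom ▸ Set.mem_iUnion_of_mem i x.2
  rw [mcomp_apply_of_offDiag_eq_zero (hJ_offDiag i) _ x hx, hJ_diag,
    copair_apply hval hdisj hdom.subset T i x x.2]
  simp

lemma eq_of_forall_mcomp_eq (hdom : f.dom ⊆ ⋃ i, (objs i).dom) {G G' : Mor f g}
    (h : ∀ i, mcomp G (J i) = mcomp G' (J i)) : G = G' := by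
  funext x y
  obtain ⟨i, hi⟩ := Set.mem_iUnion.mp (hdom x.2)
  have hxy := congrFun (congrFun (h i) ⟨x, hi⟩) y
  rwa [mcomp_apply_of_offDiag_eq_zero (hJ_offDiag i) _ _ x.2,
    mcomp_apply_of_offDiag_eq_zero (hJ_offDiag i) _ _ x.2, hJ_diag, cancel_epi] at hxy

end Coproduct

/-- coproducts of families with pairwise disjoint domains in `𝒞^{S₀}`. -/
theorem stmt1 {S₀ : Type} {C : Type u} [Category.{v} C] [Preadditive C]
    (ι : Type) (objs : ι → CObj S₀ C)
    (hdisj : ∀ i j : ι, i ≠ j → Disjoint (objs i).dom (objs j).dom)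
    (f : CObj S₀ C) (hdom : f.dom = ⋃ i, (objs i).dom)
    (hval : ∀ (i : ι) (x : (objs i).dom) (hx : (x : S₀) ∈ f.dom),
      f.val ⟨(x : S₀), hx⟩ = (objs i).val x)
    (J : ∀ i : ι, Mor (objs i) f)
    (hJ : ∀ (i : ι) (x : (objs i).dom) (y : f.dom),
      J i x y =
        if h : (x : S₀) = (y : S₀) then
          eqToHom
            (((hval i x (by rw [h]; exact y.2)).symm).trans
              (congrArg f.val (Subtype.ext h)))
        else 0) :
    ∀ (g : CObj S₀ C) (T : ∀ i : ι, Mor (objs i) g), (∀ i, FinCond (T i)) →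
      ∃! TT : {TT : Mor f g // FinCond TT}, ∀ i : ι, mcomp TT.1 (J i) = T i := by
  intro g T hT
  have hJ_offDiag : ∀ i (x : (objs i).dom) (z : f.dom), (x : S₀) ≠ z → J i x z = 0 :=
    fun i x z hxz => by rw [hJ i x z, dif_neg hxz]
  have hJ_diag : ∀ i x hx, J i x ⟨x, hx⟩ = eqToHom (hval i x hx).symm := fun i x hx => by
    rw [hJ i x, dif_pos rfl]
  refine ⟨⟨copair hval hdom.subset T, finCond_copair hval hdom.subset hT⟩,
    mcomp_copair hval hJ_offDiag hJ_diag hdisj hdom T, fun G hG => Subtype.ext ?_⟩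
  refine eq_of_forall_mcomp_eq hval hJ_offDiag hJ_diag hdom.subset fun i => ?_
  rw [hG i, mcomp_copair hval hJ_offDiag hJ_diag hdisj hdom T i]

end CS
end

section
/- For morphisms F : f → f', F' : f' → f'', G : g → g', G' : g' → g'' of 𝒞^{S₀}: (i) (F' ⊗ G') ∘ (F ⊗ G) = (F' ∘ F) ⊗ (G' ∘ G), and (ii) Id_f ⊗ Id_g = Id_{f⊗g}. In particular, the tensor product of morphisms again satisfies the finiteness condition, so ⊗ is a well-defined functor in each variable. -/
open CategoryTheory

open scoped Classical
set_option linter.unusedSectionVars false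
namespace CS

open MonoidalCategory

variable {S₀ : Type} {C : Type u} [Category.{v} C] [Preadditive C] [MonoidalCategory C]

lemma tobj_mem (γ : S₀ × S₀ ≃ S₀) (f g : CObj S₀ C)
    (z : ↑(γ '' (f.dom ×ˢ g.dom))) :
    (γ.symm ↑z).1 ∈ f.dom ∧ (γ.symm ↑z).2 ∈ g.dom := by
  obtain ⟨p, hp, hpz⟩ := z.2
  rw [← hpz, Equiv.symm_apply_apply]
  exact ⟨hp.1, hp.2⟩

/-- The tensor product of objects of `𝒞^{S₀}`:
`(f ⊗ g)(γ(x,y)) = f(x) ⊗ g(y)` on the domain `γ(S_f × S_g)`. -/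
def tobj (γ : S₀ × S₀ ≃ S₀) (f g : CObj S₀ C) : CObj S₀ C where
  dom := γ '' (f.dom ×ˢ g.dom)
  val := fun z =>
    f.val ⟨(γ.symm ↑z).1, (tobj_mem γ f g z).1⟩ ⊗ g.val ⟨(γ.symm ↑z).2, (tobj_mem γ f g z).2⟩

lemma tobj_val (γ : S₀ × S₀ ≃ S₀) (f g : CObj S₀ C) (z : (tobj γ f g).dom) :
    (tobj γ f g).val z =
      f.val ⟨(γ.symm ↑z).1, (tobj_mem γ f g z).1⟩ ⊗
        g.val ⟨(γ.symm ↑z).2, (tobj_mem γ f g z).2⟩ := rfl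

/-- The tensor product of morphisms of `𝒞^{S₀}`:
`(F ⊗ G)(γ(x,y), γ(x',y')) = F(x,x') ⊗ G(y,y')`. -/
def tmor (γ : S₀ × S₀ ≃ S₀) {f f' g g' : CObj S₀ C} (F : Mor f f') (G : Mor g g') :
    Mor (tobj γ f g) (tobj γ f' g') :=
  fun z z' =>
    F ⟨(γ.symm ↑z).1, (tobj_mem γ f g z).1⟩ ⟨(γ.symm ↑z').1, (tobj_mem γ f' g' z').1⟩ ⊗ₘ
      G ⟨(γ.symm ↑z).2, (tobj_mem γ f g z).2⟩ ⟨(γ.symm ↑z').2, (tobj_mem γ f' g' z').2⟩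

/-- The unit object `I : {∗} → Obj(𝒞)`, `∗ ↦ I`. -/
def iobj (pt : S₀) : CObj S₀ C := ⟨{pt}, fun _ => 𝟙_ C⟩

/-- The associativity constraint `A_{f,g,h}` given by Kronecker-delta identities. -/
noncomputable def massoc (hα : ∀ X Y Z : C, (X ⊗ Y) ⊗ Z = X ⊗ (Y ⊗ Z))
    (γ : S₀ × S₀ ≃ S₀) (f g h : CObj S₀ C) :
    Mor (tobj γ (tobj γ f g) h) (tobj γ f (tobj γ g h)) :=
  fun v w =>
    if hc : (γ.symm (γ.symm ↑v).1).1 = (γ.symm ↑w).1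
        ∧ (γ.symm (γ.symm ↑v).1).2 = (γ.symm (γ.symm ↑w).2).1
        ∧ (γ.symm ↑v).2 = (γ.symm (γ.symm ↑w).2).2 then
      eqToHom (by
        obtain ⟨h1, h2, h3⟩ := hc
        simp only [tobj_val]
        rw [hα]
        congr 1
        · exact congrArg f.val (Subtype.ext h1)
        congr 1
        · exact congrArg g.val (Subtype.ext h2)
        · exact congrArg h.val (Subtype.ext h3))
    else 0

/-- The inverse associativity constraint `A⁻¹_{f,g,h}`. -/
noncomputable def massocInv (hα : ∀ X Y Z : C, (X ⊗ Y) ⊗ Z = X ⊗ (Y ⊗ Z))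
    (γ : S₀ × S₀ ≃ S₀) (f g h : CObj S₀ C) :
    Mor (tobj γ f (tobj γ g h)) (tobj γ (tobj γ f g) h) :=
  fun w v =>
    if hc : (γ.symm ↑w).1 = (γ.symm (γ.symm ↑v).1).1
        ∧ (γ.symm (γ.symm ↑w).2).1 = (γ.symm (γ.symm ↑v).1).2
        ∧ (γ.symm (γ.symm ↑w).2).2 = (γ.symm ↑v).2 then
      eqToHom (by
        obtain ⟨h1, h2, h3⟩ := hc
        simp only [tobj_val]
        rw [hα]
        congr 1
        · exact congrArg f.val (Subtype.ext h1)
        congr 1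
        · exact congrArg g.val (Subtype.ext h2)
        · exact congrArg h.val (Subtype.ext h3))
    else 0

/-- The right unit `R_f : f ⊗ I → f`. -/
noncomputable def runit (hρ : ∀ X : C, X ⊗ 𝟙_ C = X) (γ : S₀ × S₀ ≃ S₀) (pt : S₀)
    (f : CObj S₀ C) : Mor (tobj γ f (iobj pt)) f :=
  fun z x' =>
    if hc : (γ.symm ↑z).1 = (x' : S₀) then
      eqToHom (by
        simp only [tobj_val]
        show f.val _ ⊗ 𝟙_ C = f.val x'
        rw [hρ]
        exact congrArg f.val (Subtype.ext hc))
    else 0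

/-- The inverse `R⁻¹_f : f → f ⊗ I`. -/
noncomputable def runitInv (hρ : ∀ X : C, X ⊗ 𝟙_ C = X) (γ : S₀ × S₀ ≃ S₀) (pt : S₀)
    (f : CObj S₀ C) : Mor f (tobj γ f (iobj pt)) :=
  fun x' z =>
    if hc : (x' : S₀) = (γ.symm ↑z).1 then
      eqToHom (by
        simp only [tobj_val]
        show f.val x' = f.val _ ⊗ 𝟙_ C
        rw [hρ]
        exact congrArg f.val (Subtype.ext hc))
    else 0

/-- The left unit `L_f : I ⊗ f → f`. -/
noncomputable def lunit (hl : ∀ X : C, 𝟙_ C ⊗ X = X) (γ : S₀ × S₀ ≃ S₀) (pt : S₀)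
    (f : CObj S₀ C) : Mor (tobj γ (iobj pt) f) f :=
  fun z x' =>
    if hc : (γ.symm ↑z).2 = (x' : S₀) then
      eqToHom (by
        simp only [tobj_val]
        show 𝟙_ C ⊗ f.val _ = f.val x'
        rw [hl]
        exact congrArg f.val (Subtype.ext hc))
    else 0

/-- The inverse `L⁻¹_f : f → I ⊗ f`. -/
noncomputable def lunitInv (hl : ∀ X : C, 𝟙_ C ⊗ X = X) (γ : S₀ × S₀ ≃ S₀) (pt : S₀)
    (f : CObj S₀ C) : Mor f (tobj γ (iobj pt) f) :=
  fun x' z =>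
    if hc : (x' : S₀) = (γ.symm ↑z).2 then
      eqToHom (by
        simp only [tobj_val]
        show f.val x' = 𝟙_ C ⊗ f.val _
        rw [hl]
        exact congrArg f.val (Subtype.ext hc))
    else 0

end CS
namespace CS

open MonoidalCategory

/-!
The points of `f ⊗ g` are the pairs of points of `f` and `g`, via `γ`. Summing over the middle
object `f' ⊗ g'` is therefore a double sum over `f'` and `g'`; by the interchange law each summand
is a tensor of composites, and since `⊗` is bilinear a finite double sum of such tensors is the
tensor of the two sums. The finiteness conditions on `F` and `G` are exactly what makes these sums
finite, and the nonzero entries of a row of `F ⊗ G` lie in the product of those of `F` and `G`.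
-/

universe u v

section

variable {S₀ : Type} {C : Type u} [Category.{v} C] [Preadditive C] [MonoidalCategory C]

lemma mid_self (f : CObj S₀ C) (x : f.dom) : mid f x x = 𝟙 (f.val x) := by
  simp [mid]

lemma mid_of_ne {f : CObj S₀ C} {x y : f.dom} (h : x ≠ y) : mid f x y = 0 :=
  dif_neg fun hxy => h (Subtype.ext hxy)

lemma FinCond.finite {f g : CObj S₀ C} {F : Mor f g} (hF : FinCond F) (x : f.dom) :
    {y : g.dom | F x y ≠ 0}.Finite := by
  by_cases hg : g.dom.Infinite
  · exact hF hg x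
  · have : Finite g.dom := (Set.not_infinite.mp hg).to_subtype
    exact Set.toFinite _

lemma FinCond.finite_support_comp {f g : CObj S₀ C} {F : Mor f g} (hF : FinCond F)
    (x : f.dom) {X : C} (G : ∀ z : g.dom, g.val z ⟶ X) :
    (Function.support fun z => F x z ≫ G z).Finite :=
  (hF.finite x).subset fun z hz h0 => hz (by simp only [h0, Limits.zero_comp])

def tobjEquiv (γ : S₀ × S₀ ≃ S₀) (f g : CObj S₀ C) : f.dom × g.dom ≃ (tobj γ f g).dom where
  toFun p := ⟨γ (p.1, p.2), (p.1, p.2), ⟨p.1.2, p.2.2⟩, rfl⟩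
  invFun z := (⟨(γ.symm z).1, (tobj_mem γ f g z).1⟩, ⟨(γ.symm z).2, (tobj_mem γ f g z).2⟩)
  left_inv p := by ext <;> simp
  right_inv z := Subtype.ext (by simp)

lemma tmor_apply (γ : S₀ × S₀ ≃ S₀) {f f' g g' : CObj S₀ C} (F : Mor f f') (G : Mor g g')
    (z : (tobj γ f g).dom) (z' : (tobj γ f' g').dom) :
    tmor γ F G z z' =
      F ((tobjEquiv γ f g).symm z).1 ((tobjEquiv γ f' g').symm z').1 ⊗ₘ
        G ((tobjEquiv γ f g).symm z).2 ((tobjEquiv γ f' g').symm z').2 := rfl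

lemma support_tensorHom_subset {α β : Type*} {X X' Y Y' : C} [MonoidalPreadditive C]
    (u : α → (X ⟶ X')) (v : β → (Y ⟶ Y')) :
    (Function.support fun p : α × β => u p.1 ⊗ₘ v p.2) ⊆
      Function.support u ×ˢ Function.support v := by
  intro p hp
  refine ⟨fun hu => hp ?_, fun hv => hp ?_⟩
  · simp only [hu, MonoidalPreadditive.zero_tensor]
  · simp only [hv, MonoidalPreadditive.tensor_zero]

lemma finsum_tensorHom_finsum {α β : Type*} {X X' Y Y' : C} [MonoidalPreadditive C]
    (u : α → (X ⟶ X')) (v : β → (Y ⟶ Y'))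
    (hu : (Function.support u).Finite) (hv : (Function.support v).Finite) :
    (∑ᶠ a, u a) ⊗ₘ (∑ᶠ b, v b) = ∑ᶠ p : α × β, u p.1 ⊗ₘ v p.2 := by
  rw [finsum_eq_sum_of_support_subset u (s := hu.toFinset) (by simp),
    finsum_eq_sum_of_support_subset v (s := hv.toFinset) (by simp),
    finsum_eq_sum_of_support_subset _ (s := hu.toFinset ×ˢ hv.toFinset)
      (by simpa using support_tensorHom_subset u v),
    Finset.sum_product, sum_tensor]
  exact Finset.sum_congr rfl fun a _ => tensor_sum _ _ _

variable [MonoidalPreadditive C] (γ : S₀ × S₀ ≃ S₀)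

theorem mcomp_tmor {f f' f'' g g' g'' : CObj S₀ C} {F : Mor f f'} (F' : Mor f' f'')
    {G : Mor g g'} (G' : Mor g' g'') (hF : FinCond F) (hG : FinCond G) :
    mcomp (tmor γ F' G') (tmor γ F G) = tmor γ (mcomp F' F) (mcomp G' G) := by
  funext z z'
  let a := (tobjEquiv γ f g).symm z
  let b := (tobjEquiv γ f'' g'').symm z'
  let summand : f'.dom × g'.dom → ((tobj γ f g).val z ⟶ (tobj γ f'' g'').val z') :=
    fun p => (F a.1 p.1 ≫ F' p.1 b.1) ⊗ₘ (G a.2 p.2 ≫ G' p.2 b.2)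
  calc mcomp (tmor γ F' G') (tmor γ F G) z z'
      = ∑ᶠ w, summand ((tobjEquiv γ f' g').symm w) :=
        finsum_congr fun _ => tensorHom_comp_tensorHom _ _ _ _
    _ = ∑ᶠ p, summand p := finsum_comp_equiv (tobjEquiv γ f' g').symm
    _ = tmor γ (mcomp F' F) (mcomp G' G) z z' :=
        (finsum_tensorHom_finsum (fun x => F a.1 x ≫ F' x b.1) (fun y => G a.2 y ≫ G' y b.2)
          (hF.finite_support_comp a.1 _) (hG.finite_support_comp a.2 _)).symm

theorem tmor_mid (f g : CObj S₀ C) : tmor γ (mid f) (mid g) = mid (tobj γ f g) := by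
  funext z z'
  rw [tmor_apply]
  obtain rfl | hne := eq_or_ne z z'
  · rw [mid_self, mid_self, mid_self, id_tensorHom_id]
    rfl
  · have hne' : (tobjEquiv γ f g).symm z ≠ (tobjEquiv γ f g).symm z' :=
      (tobjEquiv γ f g).symm.injective.ne hne
    rw [mid_of_ne hne]
    obtain h1 | h2 := not_and_or.mp (mt Prod.ext_iff.mpr hne')
    · rw [mid_of_ne h1, MonoidalPreadditive.zero_tensor]
      rfl
    · rw [mid_of_ne h2, MonoidalPreadditive.tensor_zero]
      rfl

theorem FinCond.tmor {f f' g g' : CObj S₀ C} {F : Mor f f'} {G : Mor g g'}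
    (hF : FinCond F) (hG : FinCond G) : FinCond (tmor γ F G) := by
  intro _ z
  let a := (tobjEquiv γ f g).symm z
  refine (((hF.finite a.1).prod (hG.finite a.2)).image (tobjEquiv γ f' g')).subset ?_
  intro w hw
  refine ⟨(tobjEquiv γ f' g').symm w, ⟨fun h0 => hw ?_, fun h0 => hw ?_⟩,
    Equiv.apply_symm_apply _ _⟩
  · rw [tmor_apply, h0, MonoidalPreadditive.zero_tensor]
    rfl
  · rw [tmor_apply, h0, MonoidalPreadditive.tensor_zero]
    rfl

end

theorem stmt3_general {S₀ : Type} {C : Type u} [Category.{v} C] [Preadditive C]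
    [MonoidalCategory C] [MonoidalPreadditive C]
    (γ : S₀ × S₀ ≃ S₀) :
    -- (i) `(F' ⊗ G') ∘ (F ⊗ G) = (F' ∘ F) ⊗ (G' ∘ G)`
    (∀ (f f' f'' g g' g'' : CObj S₀ C) (F : Mor f f') (F' : Mor f' f'')
        (G : Mor g g') (G' : Mor g' g''),
        FinCond F → FinCond F' → FinCond G → FinCond G' →
        mcomp (tmor γ F' G') (tmor γ F G) = tmor γ (mcomp F' F) (mcomp G' G))
    -- (ii) `Id_f ⊗ Id_g = Id_{f ⊗ g}`
    ∧ (∀ f g : CObj S₀ C, tmor γ (mid f) (mid g) = mid (tobj γ f g))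
    -- the tensor product of morphisms again satisfies the finiteness condition
    ∧ (∀ (f f' g g' : CObj S₀ C) (F : Mor f f') (G : Mor g g'),
        FinCond F → FinCond G → FinCond (tmor γ F G)) :=
  ⟨fun _ _ _ _ _ _ _ F' _ G' hF _ hG _ => mcomp_tmor γ F' G' hF hG, tmor_mid γ,
    fun _ _ _ _ _ _ => FinCond.tmor γ⟩

/-- functoriality of the tensor product of morphisms in `𝒞^{S₀}`. -/
theorem stmt3 {S₀ : Type} {C : Type u} [Category.{v} C] [Preadditive C]
    [MonoidalCategory C] [MonoidalPreadditive C] (hS₀ : Infinite S₀)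
    (γ : S₀ × S₀ ≃ S₀) :
    -- (i) `(F' ⊗ G') ∘ (F ⊗ G) = (F' ∘ F) ⊗ (G' ∘ G)`
    (∀ (f f' f'' g g' g'' : CObj S₀ C) (F : Mor f f') (F' : Mor f' f'')
        (G : Mor g g') (G' : Mor g' g''),
        FinCond F → FinCond F' → FinCond G → FinCond G' →
        mcomp (tmor γ F' G') (tmor γ F G) = tmor γ (mcomp F' F) (mcomp G' G))
    -- (ii) `Id_f ⊗ Id_g = Id_{f ⊗ g}`
    ∧ (∀ f g : CObj S₀ C, tmor γ (mid f) (mid g) = mid (tobj γ f g))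
    -- the tensor product of morphisms again satisfies the finiteness condition
    ∧ (∀ (f f' g g' : CObj S₀ C) (F : Mor f f') (G : Mor g g'),
        FinCond F → FinCond G → FinCond (tmor γ F G)) :=
  stmt3_general γ

end CS
end

section
/- The associativity constraint A, the left unit L and the right unit R of 𝒞^{S₀} satisfy the Triangle Axiom: for all objects f, g, (Id_f ⊗ L_g) ∘ A_{f,I,g} = R_f ⊗ Id_g. -/
open CategoryTheory

open scoped Classical
set_option linter.unusedSectionVars false
/-!
Every row `γ(γ(x, y), z)` of `A_{f,I,g}` has a single nonzero entry, an identity at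
`γ(x, γ(y, z))`, so the sum defining the composite collapses to one term. Entrywise both sides
are then an `eqToHom` when `x = x'` and `z = z'`, and `0` otherwise, because `⊗` of morphisms
kills zeros.
-/

namespace CS

open MonoidalCategory

lemma eqToHom_tensorHom_eqToHom {C : Type u} [Category.{v} C] [MonoidalCategory C]
    {X X' Y Y' : C} (hX : X = X') (hY : Y = Y') :
    eqToHom hX ⊗ₘ eqToHom hY = eqToHom (by rw [hX, hY]) := by
  subst hX hY
  simp only [eqToHom_refl, id_tensorHom_id]

section Associator

variable {S₀ : Type} {C : Type u} [Category.{v} C] [Preadditive C] [MonoidalCategory C]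
  (γ : S₀ × S₀ ≃ S₀) {f g h : CObj S₀ C}

/-- `γ(x, γ(y, z))` for `v = γ(γ(x, y), z)`. -/
def assocTarget (v : (tobj γ (tobj γ f g) h).dom) : (tobj γ f (tobj γ g h)).dom :=
  ⟨γ ((γ.symm (γ.symm v).1).1, γ ((γ.symm (γ.symm v).1).2, (γ.symm v).2)), by
    obtain ⟨hfg, hh⟩ := tobj_mem γ (tobj γ f g) h v
    obtain ⟨hf, hg⟩ := tobj_mem γ f g ⟨_, hfg⟩
    exact Set.mem_image_of_mem γ ⟨hf, Set.mem_image_of_mem γ ⟨hg, hh⟩⟩⟩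

@[simp]
lemma symm_assocTarget (v : (tobj γ (tobj γ f g) h).dom) :
    γ.symm (assocTarget γ v) =
      ((γ.symm (γ.symm v).1).1, γ ((γ.symm (γ.symm v).1).2, (γ.symm v).2)) :=
  γ.symm_apply_apply _

variable (hα : ∀ X Y Z : C, (X ⊗ Y) ⊗ Z = X ⊗ (Y ⊗ Z))

lemma massoc_eq_zero_of_ne_assocTarget {v : (tobj γ (tobj γ f g) h).dom}
    {w : (tobj γ f (tobj γ g h)).dom} (hw : w ≠ assocTarget γ v) :
    massoc hα γ f g h v w = 0 := by
  refine dif_neg fun ⟨hx, hy, hz⟩ => hw (Subtype.ext ?_)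
  have hyz : (γ.symm w).2 = γ ((γ.symm (γ.symm v).1).2, (γ.symm v).2) := by
    rw [hy, hz, Prod.mk.eta, Equiv.apply_symm_apply]
  change (w : S₀) = γ (_, _)
  rw [hx, ← hyz, Prod.mk.eta, Equiv.apply_symm_apply]

lemma mcomp_massoc {k : CObj S₀ C} (G : Mor (tobj γ f (tobj γ g h)) k)
    (v : (tobj γ (tobj γ f g) h).dom) (w : k.dom) :
    mcomp G (massoc hα γ f g h) v w =
      massoc hα γ f g h v (assocTarget γ v) ≫ G (assocTarget γ v) w := by
  refine finsum_eq_single _ _ fun z hz => ?_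
  rw [massoc_eq_zero_of_ne_assocTarget γ hα hz, Limits.zero_comp]

lemma massoc_assocTarget (v : (tobj γ (tobj γ f g) h).dom) :
    ∃ e, massoc hα γ f g h v (assocTarget γ v) = eqToHom e :=
  ⟨_, dif_pos (by simp only [symm_assocTarget, Equiv.symm_apply_apply, and_self])⟩

end Associator

theorem stmt6_general {S₀ : Type} {C : Type u} [Category.{v} C] [Preadditive C]
    [MonoidalCategory C] [MonoidalPreadditive C]
    (γ : S₀ × S₀ ≃ S₀) (pt : S₀)
    (hα : ∀ X Y Z : C, (X ⊗ Y) ⊗ Z = X ⊗ (Y ⊗ Z))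
    (hρ : ∀ X : C, X ⊗ 𝟙_ C = X) (hl : ∀ X : C, 𝟙_ C ⊗ X = X) :
    ∀ f g : CObj S₀ C,
      mcomp (tmor γ (mid f) (lunit hl γ pt g)) (massoc hα γ f (iobj pt) g) =
        tmor γ (runit hρ γ pt f) (mid g) := by
  intro f g
  funext v w
  obtain ⟨e, he⟩ := massoc_assocTarget γ hα (f := f) (g := iobj pt) (h := g) v
  rw [mcomp_massoc, he, tmor, tmor, mid, mid, lunit, runit]
  simp only [symm_assocTarget, Equiv.symm_apply_apply]
  split_ifs with hx hz hz
  · rw [eqToHom_tensorHom_eqToHom, eqToHom_tensorHom_eqToHom]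
    exact eqToHom_trans _ _
  · rw [MonoidalPreadditive.tensor_zero, MonoidalPreadditive.tensor_zero]
    exact Limits.comp_zero
  all_goals
    rw [MonoidalPreadditive.zero_tensor, MonoidalPreadditive.zero_tensor]
    exact Limits.comp_zero

/-- the Triangle Axiom `(Id_f ⊗ L_g) ∘ A_{f,I,g} = R_f ⊗ Id_g` in `𝒞^{S₀}`. -/
theorem stmt6 {S₀ : Type} {C : Type u} [Category.{v} C] [Preadditive C]
    [MonoidalCategory C] [MonoidalPreadditive C] (hS₀ : Infinite S₀)
    (γ : S₀ × S₀ ≃ S₀) (pt : S₀)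
    (hα : ∀ X Y Z : C, (X ⊗ Y) ⊗ Z = X ⊗ (Y ⊗ Z))
    (hρ : ∀ X : C, X ⊗ 𝟙_ C = X) (hl : ∀ X : C, 𝟙_ C ⊗ X = X) :
    ∀ f g : CObj S₀ C,
      mcomp (tmor γ (mid f) (lunit hl γ pt g)) (massoc hα γ f (iobj pt) g) =
        tmor γ (runit hρ γ pt f) (mid g) :=
  stmt6_general γ pt hα hρ hl

end CS
end

section
/- Suppose 𝒞 is braided with braiding c and has a twist θ (a natural family of isomorphisms θ_V : V → V compatible with the braiding: θ_{V⊗W} = c_{W,V} ∘ c_{V,W} ∘ (θ_V ⊗ θ_W)). Then the family Θ_f : f → f, Θ_f(x,y) = δ_{x,y} θ_{f(x)}, is a twist for the braided monoidal category 𝒞^{S₀} with braiding C_{f,g}(γ(x,y), γ(y',x')) = δ_{x,x'} δ_{y,y'} c_{f(x),g(y)}: each Θ_f is a natural isomorphism and Θ_{f⊗g} = C_{g,f} ∘ C_{f,g} ∘ (Θ_f ⊗ Θ_g). -/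
/-!
`Θ_f` is the diagonal matrix with entries `θ`, so composing with it multiplies every entry of a
morphism by `θ` on one side; invertibility (with the diagonal matrix of the `θ⁻¹` as inverse) and
naturality therefore hold entrywise. For the balancing axiom, `Θ_f ⊗ Θ_g` is diagonal with entries
`θ ⊗ θ`, and the row of `C_{f,g}` at `γ(x,y)` has its only nonzero entry at `γ(y,x)`. Hence the
`(v,w)` entry of `C_{g,f} ∘ C_{f,g} ∘ (Θ_f ⊗ Θ_g)` is `δ_{v,w} (θ ⊗ θ) ≫ c ≫ c`, which is
`θ_{f(x) ⊗ g(y)}` by the twist axiom of `𝒞`.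
-/

open CategoryTheory

open scoped Classical
set_option linter.unusedSectionVars false
namespace CS

open MonoidalCategory

variable {S₀ : Type} {C : Type u} [Category.{v} C] [Preadditive C] [MonoidalCategory C]

/-- The braiding `C_{f,g}(γ(x,y),γ(y',x')) = δ_{x,x'} δ_{y,y'} c_{f(x),g(y)}` of `𝒞^{S₀}`. -/
noncomputable def mbraid [BraidedCategory C] (γ : S₀ × S₀ ≃ S₀) (f g : CObj S₀ C) :
    Mor (tobj γ f g) (tobj γ g f) :=
  fun v w =>
    if hc : (γ.symm ↑v).1 = (γ.symm ↑w).2 ∧ (γ.symm ↑v).2 = (γ.symm ↑w).1 then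
      (β_ (f.val ⟨(γ.symm ↑v).1, (tobj_mem γ f g v).1⟩)
          (g.val ⟨(γ.symm ↑v).2, (tobj_mem γ f g v).2⟩)).hom ≫
        eqToHom (by
          simp only [tobj_val]
          congr 1
          · exact congrArg g.val (Subtype.ext hc.2)
          · exact congrArg f.val (Subtype.ext hc.1))
    else 0

/-- The inverse braiding `C⁻¹_{f,g}`. -/
noncomputable def mbraidInv [BraidedCategory C] (γ : S₀ × S₀ ≃ S₀) (f g : CObj S₀ C) :
    Mor (tobj γ g f) (tobj γ f g) :=
  fun w v =>
    if hc : (γ.symm ↑w).1 = (γ.symm ↑v).2 ∧ (γ.symm ↑w).2 = (γ.symm ↑v).1 then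
      (β_ (f.val ⟨(γ.symm ↑w).2, (tobj_mem γ g f w).2⟩)
          (g.val ⟨(γ.symm ↑w).1, (tobj_mem γ g f w).1⟩)).inv ≫
        eqToHom (by
          simp only [tobj_val]
          congr 1
          · exact congrArg f.val (Subtype.ext hc.2)
          · exact congrArg g.val (Subtype.ext hc.1))
    else 0

/-- The twist `Θ_f(x,y) = δ_{x,y} θ_{f(x)}` of `𝒞^{S₀}`, extending a twist `θ` of `𝒞`. -/
noncomputable def mtwist (θ : ∀ X : C, X ⟶ X) (f : CObj S₀ C) : Mor f f :=
  fun x y =>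
    if h : (x : S₀) = (y : S₀) then
      θ (f.val x) ≫ eqToHom (congrArg f.val (Subtype.ext h))
    else 0

/-- The class `𝒜` of isomorphisms of `𝒞^{S₀}` generated by the identities and the
constraints `A^{±1}`, `R^{±1}`, `L^{±1}` under tensor product and composition. -/
inductive MStruct (hα : ∀ X Y Z : C, (X ⊗ Y) ⊗ Z = X ⊗ (Y ⊗ Z))
    (hl : ∀ X : C, 𝟙_ C ⊗ X = X) (hρ : ∀ X : C, X ⊗ 𝟙_ C = X)
    (γ : S₀ × S₀ ≃ S₀) (pt : S₀) :
    ∀ {f g : CObj S₀ C}, Mor f g → Prop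
  | id (f : CObj S₀ C) : MStruct hα hl hρ γ pt (mid f)
  | assoc (f g h : CObj S₀ C) : MStruct hα hl hρ γ pt (massoc hα γ f g h)
  | assocInv (f g h : CObj S₀ C) : MStruct hα hl hρ γ pt (massocInv hα γ f g h)
  | runit (f : CObj S₀ C) : MStruct hα hl hρ γ pt (runit hρ γ pt f)
  | runitInv (f : CObj S₀ C) : MStruct hα hl hρ γ pt (runitInv hρ γ pt f)
  | lunit (f : CObj S₀ C) : MStruct hα hl hρ γ pt (lunit hl γ pt f)
  | lunitInv (f : CObj S₀ C) : MStruct hα hl hρ γ pt (lunitInv hl γ pt f)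
  | comp {f g h : CObj S₀ C} {F : Mor f g} {G : Mor g h} :
      MStruct hα hl hρ γ pt F → MStruct hα hl hρ γ pt G → MStruct hα hl hρ γ pt (mcomp G F)
  | tensor {f f' g g' : CObj S₀ C} {F : Mor f f'} {G : Mor g g'} :
      MStruct hα hl hρ γ pt F → MStruct hα hl hρ γ pt G → MStruct hα hl hρ γ pt (tmor γ F G)

/-- `F ≐ G`: equality of morphisms of `𝒞^{S₀}` up to composition with isomorphisms
built from the associativity and unit constraints. -/
noncomputable def Doteq (hα : ∀ X Y Z : C, (X ⊗ Y) ⊗ Z = X ⊗ (Y ⊗ Z))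
    (hl : ∀ X : C, 𝟙_ C ⊗ X = X) (hρ : ∀ X : C, X ⊗ 𝟙_ C = X)
    (γ : S₀ × S₀ ≃ S₀) (pt : S₀) {f g f' g' : CObj S₀ C}
    (F : Mor f g) (G : Mor f' g') : Prop :=
  ∃ (X : Mor g g') (Y : Mor f' f), MStruct hα hl hρ γ pt X ∧ MStruct hα hl hρ γ pt Y ∧
    G = mcomp X (mcomp F Y)

end CS
namespace CS

open MonoidalCategory Limits

section Entries

variable {S₀ : Type} {C : Type u} [Category.{v} C] [Preadditive C]

lemma mcomp_apply_of_row_single {f g h : CObj S₀ C} (G : Mor g h) (F : Mor f g) {x : f.dom}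
    (z₀ : g.dom) (hF : ∀ z, z ≠ z₀ → F x z = 0) (y : h.dom) :
    mcomp G F x y = F x z₀ ≫ G z₀ y :=
  finsum_eq_single _ z₀ fun z hz => by rw [hF z hz, zero_comp]

lemma mcomp_apply_of_col_single {f g h : CObj S₀ C} (G : Mor g h) (F : Mor f g) {y : h.dom}
    (z₀ : g.dom) (hG : ∀ z, z ≠ z₀ → G z y = 0) (x : f.dom) :
    mcomp G F x y = F x z₀ ≫ G z₀ y :=
  finsum_eq_single _ z₀ fun z hz => by rw [hG z hz, comp_zero]

variable (φ : ∀ X : C, X ⟶ X) (f : CObj S₀ C)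

lemma mtwist_apply_self (x : f.dom) : mtwist φ f x x = φ (f.val x) := by
  simp [mtwist]

lemma mtwist_apply_of_ne {x y : f.dom} (h : x ≠ y) : mtwist φ f x y = 0 :=
  dif_neg fun e => h (Subtype.ext e)

lemma mcomp_mtwist_apply {g : CObj S₀ C} (F : Mor f g) (x : f.dom) (y : g.dom) :
    mcomp F (mtwist φ f) x y = φ (f.val x) ≫ F x y := by
  rw [mcomp_apply_of_row_single _ _ x fun z hz => mtwist_apply_of_ne φ f hz.symm,
    mtwist_apply_self]

lemma mtwist_mcomp_apply {e : CObj S₀ C} (F : Mor e f) (x : e.dom) (y : f.dom) :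
    mcomp (mtwist φ f) F x y = F x y ≫ φ (f.val y) := by
  rw [mcomp_apply_of_col_single _ _ y fun z hz => mtwist_apply_of_ne φ f hz,
    mtwist_apply_self]

lemma mcomp_mtwist_mtwist (ψ : ∀ X : C, X ⟶ X) :
    mcomp (mtwist ψ f) (mtwist φ f) = mtwist (fun X => φ X ≫ ψ X) f := by
  funext x y
  rw [mcomp_mtwist_apply]
  by_cases hxy : x = y
  · subst hxy
    rw [mtwist_apply_self, mtwist_apply_self]
  · rw [mtwist_apply_of_ne _ _ hxy, mtwist_apply_of_ne _ _ hxy, comp_zero]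

lemma mtwist_id : mtwist (fun X : C => 𝟙 X) f = mid f := by
  funext x y
  simp [mtwist, mid]

end Entries

section Tensor

variable {S₀ : Type} {C : Type u} [Category.{v} C] [Preadditive C] [MonoidalCategory C]
  (γ : S₀ × S₀ ≃ S₀) {f g : CObj S₀ C}

def tobjFst (v : (tobj γ f g).dom) : f.dom := ⟨(γ.symm v).1, (tobj_mem γ f g v).1⟩

def tobjSnd (v : (tobj γ f g).dom) : g.dom := ⟨(γ.symm v).2, (tobj_mem γ f g v).2⟩

lemma tobj_dom_ext {v w : (tobj γ f g).dom} (h : γ.symm v = γ.symm w) : v = w :=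
  Subtype.ext (γ.symm.injective h)

variable [MonoidalPreadditive C] (φ ψ : ∀ X : C, X ⟶ X)

lemma tmor_mtwist_apply_self (v : (tobj γ f g).dom) :
    tmor γ (mtwist φ f) (mtwist ψ g) v v =
      φ (f.val (tobjFst γ v)) ⊗ₘ ψ (g.val (tobjSnd γ v)) := by
  simp only [tmor, mtwist_apply_self]
  rfl

lemma tmor_mtwist_apply_of_ne {v w : (tobj γ f g).dom} (h : v ≠ w) :
    tmor γ (mtwist φ f) (mtwist ψ g) v w = 0 := by
  by_cases h₁ : (γ.symm v).1 = (γ.symm w).1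
  · have h₂ : (γ.symm v).2 ≠ (γ.symm w).2 := fun h₂ =>
      h (tobj_dom_ext γ (Prod.ext h₁ h₂))
    simp only [tmor, mtwist, h₂, ↓reduceDIte, MonoidalPreadditive.tensor_zero]
    rfl
  · simp only [tmor, mtwist, h₁, ↓reduceDIte, MonoidalPreadditive.zero_tensor]
    rfl

lemma mcomp_tmor_mtwist_apply {h : CObj S₀ C} (G : Mor (tobj γ f g) h)
    (v : (tobj γ f g).dom) (w : h.dom) :
    mcomp G (tmor γ (mtwist φ f) (mtwist ψ g)) v w =
      tmor γ (mtwist φ f) (mtwist ψ g) v v ≫ G v w :=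
  mcomp_apply_of_row_single _ _ v (fun _ hz => tmor_mtwist_apply_of_ne γ φ ψ (Ne.symm hz)) w

end Tensor

section Braiding

variable {C : Type u} [Category.{v} C] [MonoidalCategory C] [BraidedCategory C]

-- The entries of `mbraid` carry transports along `γ.symm (γ p) = p`, true only propositionally.
lemma braiding_comp_eqToHom_comp_braiding {X X' Y Y' : C} (hX : X' = X) (hY : Y' = Y)
    (h₁ : Y ⊗ X = Y' ⊗ X') (h₂ : X' ⊗ Y' = X ⊗ Y) :
    (β_ X Y).hom ≫ eqToHom h₁ ≫ (β_ Y' X').hom ≫ eqToHom h₂ =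
      (β_ X Y).hom ≫ (β_ Y X).hom := by
  subst hX hY
  simp

variable {S₀ : Type} [Preadditive C] (γ : S₀ × S₀ ≃ S₀) {f g : CObj S₀ C}

lemma mbraid_apply_of_ne {v : (tobj γ f g).dom} {w w' : (tobj γ g f).dom}
    (hw' : γ.symm w' = (γ.symm v).swap) (h : w ≠ w') : mbraid γ f g v w = 0 :=
  dif_neg fun hc => h (tobj_dom_ext γ ((Prod.ext hc.2.symm hc.1.symm).trans hw'.symm))

lemma mbraid_apply_comp_mbraid_apply {v : (tobj γ f g).dom} {w : (tobj γ g f).dom}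
    (h : γ.symm w = (γ.symm v).swap) :
    mbraid γ f g v w ≫ mbraid γ g f w v =
      (β_ (f.val (tobjFst γ v)) (g.val (tobjSnd γ v))).hom ≫
        (β_ (g.val (tobjSnd γ v)) (f.val (tobjFst γ v))).hom := by
  have hw := Prod.ext_iff.mp h
  rw [mbraid, dif_pos ⟨hw.2.symm, hw.1.symm⟩, mbraid, dif_pos ⟨hw.1, hw.2⟩]
  exact (Category.assoc _ _ _).trans <| braiding_comp_eqToHom_comp_braiding
    (congrArg f.val (Subtype.ext hw.2)) (congrArg g.val (Subtype.ext hw.1)) _ _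

lemma exists_symm_eq_swap (v : (tobj γ f g).dom) :
    ∃ w : (tobj γ g f).dom, γ.symm w = (γ.symm v).swap :=
  ⟨⟨γ (γ.symm v).swap, _, ⟨(tobj_mem γ f g v).2, (tobj_mem γ f g v).1⟩, rfl⟩,
    γ.symm_apply_apply _⟩

end Braiding

theorem stmt10_general {S₀ : Type} {C : Type u} [Category.{v} C] [Preadditive C]
    [MonoidalCategory C] [MonoidalPreadditive C] [BraidedCategory C]
    (γ : S₀ × S₀ ≃ S₀)
    (θ : ∀ X : C, X ⟶ X) (hiso : ∀ X : C, IsIso (θ X))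
    (hnat : ∀ (X Y : C) (α : X ⟶ Y), α ≫ θ Y = θ X ≫ α)
    (htw : ∀ X Y : C, θ (X ⊗ Y) = (θ X ⊗ₘ θ Y) ≫ (β_ X Y).hom ≫ (β_ Y X).hom) :
    -- each `Θ_f` is an isomorphism
    (∀ f : CObj S₀ C, ∃ Ψ : Mor f f,
      mcomp Ψ (mtwist θ f) = mid f ∧ mcomp (mtwist θ f) Ψ = mid f)
    -- `Θ` is natural
    ∧ (∀ (f g : CObj S₀ C) (F : Mor f g), FinCond F →
        mcomp F (mtwist θ f) = mcomp (mtwist θ g) F)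
    -- compatibility with the braiding: `Θ_{f⊗g} = C_{g,f} ∘ C_{f,g} ∘ (Θ_f ⊗ Θ_g)`
    ∧ (∀ f g : CObj S₀ C,
        mtwist θ (tobj γ f g) =
          mcomp (mbraid γ g f) (mcomp (mbraid γ f g) (tmor γ (mtwist θ f) (mtwist θ g)))) := by
  refine ⟨fun f => ⟨mtwist (fun X => inv (θ X)) f, ?_, ?_⟩, fun f g F _ => ?_,
    fun f g => ?_⟩
  · simp only [mcomp_mtwist_mtwist, IsIso.hom_inv_id, mtwist_id]
  · simp only [mcomp_mtwist_mtwist, IsIso.inv_hom_id, mtwist_id]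
  · funext x y
    rw [mcomp_mtwist_apply, mtwist_mcomp_apply, hnat]
  · funext v w
    obtain ⟨v', hv'⟩ := exists_symm_eq_swap γ v
    rw [mcomp_apply_of_row_single _ _ v' fun z hz => by
        rw [mcomp_tmor_mtwist_apply, mbraid_apply_of_ne γ hv' hz, comp_zero],
      mcomp_tmor_mtwist_apply, Category.assoc]
    by_cases hvw : v = w
    · subst hvw
      rw [mbraid_apply_comp_mbraid_apply γ hv', tmor_mtwist_apply_self, mtwist_apply_self]
      exact htw _ _
    · have hv : γ.symm v = (γ.symm v').swap := by rw [hv', Prod.swap_swap]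
      rw [mtwist_apply_of_ne _ _ hvw, mbraid_apply_of_ne γ hv (Ne.symm hvw), comp_zero, comp_zero]

/-- a twist `θ` of `𝒞` extends to a twist `Θ_f(x,y) = δ_{x,y} θ_{f(x)}`
of the braided monoidal category `𝒞^{S₀}`. -/
theorem stmt10 {S₀ : Type} {C : Type u} [Category.{v} C] [Preadditive C]
    [MonoidalCategory C] [MonoidalPreadditive C] [BraidedCategory C]
    (hS₀ : Infinite S₀) (γ : S₀ × S₀ ≃ S₀)
    (θ : ∀ X : C, X ⟶ X) (hiso : ∀ X : C, IsIso (θ X))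
    (hnat : ∀ (X Y : C) (α : X ⟶ Y), α ≫ θ Y = θ X ≫ α)
    (htw : ∀ X Y : C, θ (X ⊗ Y) = (θ X ⊗ₘ θ Y) ≫ (β_ X Y).hom ≫ (β_ Y X).hom) :
    -- each `Θ_f` is an isomorphism
    (∀ f : CObj S₀ C, ∃ Ψ : Mor f f,
      mcomp Ψ (mtwist θ f) = mid f ∧ mcomp (mtwist θ f) Ψ = mid f)
    -- `Θ` is natural
    ∧ (∀ (f g : CObj S₀ C) (F : Mor f g), FinCond F →
        mcomp F (mtwist θ f) = mcomp (mtwist θ g) F)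
    -- compatibility with the braiding: `Θ_{f⊗g} = C_{g,f} ∘ C_{f,g} ∘ (Θ_f ⊗ Θ_g)`
    ∧ (∀ f g : CObj S₀ C,
        mtwist θ (tobj γ f g) =
          mcomp (mbraid γ g f) (mcomp (mbraid γ f g) (tmor γ (mtwist θ f) (mtwist θ g)))) :=
  stmt10_general γ θ hiso hnat htw

end CS
end

section
/- For all objects x, y, z of 𝒱, the isomorphisms Γ satisfy Γ_{x, y⊗z} ∘ (Γ_{y,z} ⊗ id_{x*⊗x}) = Γ_{x⊗y, z} ∘ (id_{z*⊗z} ⊗ Γ_{x,y}) as morphisms z* ⊗ z ⊗ y* ⊗ y ⊗ x* ⊗ x → (x ⊗ y ⊗ z)* ⊗ (x ⊗ y ⊗ z) (where the duals (x⊗y)* and (y⊗z)* are identified with the corresponding iterated duals via the isomorphisms γ). -/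
/-!
Writing `Γ_{x,y} = μ ≫ (γ_{x,y} ⊗ β_{y,x})` with `μ = tensorμ` the middle-four interchange, the
identity splits into three coherence facts: associativity of `μ` (the monoidal structure of
`⊗ : 𝒱 × 𝒱 ⥤ 𝒱`), associativity of `γ`, and associativity of the reversed braiding
`β_{y,x} : y ⊗ x → x ⊗ y` (hexagons plus Yang–Baxter). Maps into a dual are determined by their
pairing with the evaluation, and both sides of the associativity of `γ` pair to the iterated
evaluation `z* ⊗ y* ⊗ x* ⊗ x ⊗ y ⊗ z → I`.
-/

open CategoryTheory MonoidalCategory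

universe u v

variable {V : Type u} [Category.{v} V] [MonoidalCategory V] [BraidedCategory V]
  [RightRigidCategory V]

/-- The canonical isomorphism `γ_{x,y} : y* ⊗ x* → (x ⊗ y)*`. -/
noncomputable def gamIso (x y : V) : yᘁ ⊗ xᘁ ⟶ (x ⊗ y)ᘁ :=
  𝟙 (yᘁ ⊗ xᘁ) ⊗≫ ((yᘁ ⊗ xᘁ) ◁ η_ (x ⊗ y) ((x ⊗ y)ᘁ)) ⊗≫
    (yᘁ ◁ ((ε_ x xᘁ) ▷ (y ⊗ (x ⊗ y)ᘁ))) ⊗≫ ((ε_ y yᘁ) ▷ (x ⊗ y)ᘁ) ⊗≫ 𝟙 ((x ⊗ y)ᘁ)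

/-- The isomorphism `Γ_{x,y} : y* ⊗ y ⊗ x* ⊗ x → (x ⊗ y)* ⊗ (x ⊗ y)`. -/
noncomputable def GamIso (x y : V) : (yᘁ ⊗ y) ⊗ (xᘁ ⊗ x) ⟶ (x ⊗ y)ᘁ ⊗ (x ⊗ y) :=
  𝟙 ((yᘁ ⊗ y) ⊗ (xᘁ ⊗ x)) ⊗≫ (yᘁ ◁ ((β_ y xᘁ).hom ▷ x)) ⊗≫
    (gamIso x y ⊗ₘ (β_ y x).hom)

/-- The morphism `id_{x*} ⊗ b_x ⊗ id_x : x* ⊗ x → (x* ⊗ x) ⊗ (x* ⊗ x)`. -/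
noncomputable def DlMor (x : V) : xᘁ ⊗ x ⟶ (xᘁ ⊗ x) ⊗ (xᘁ ⊗ x) :=
  𝟙 (xᘁ ⊗ x) ⊗≫ (xᘁ ◁ ((η_ x xᘁ) ▷ x)) ⊗≫ 𝟙 ((xᘁ ⊗ x) ⊗ (xᘁ ⊗ x))

open BraidedCategory

section General

variable {C : Type*} [Category C] [MonoidalCategory C]

lemma hom_rightDual_ext {A X : C} [HasRightDual X] {f g : A ⟶ Xᘁ}
    (h : f ▷ X ≫ ε_ X Xᘁ = g ▷ X ≫ ε_ X Xᘁ) : f = g := by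
  have := congrArg (tensorRightHomEquiv A X Xᘁ (𝟙_ C)) h
  rw [tensorRightHomEquiv_whiskerRight_comp_evaluation,
    tensorRightHomEquiv_whiskerRight_comp_evaluation] at this
  exact (cancel_mono (λ_ Xᘁ).inv).1 this

variable [BraidedCategory C]

lemma tensorμ_associativity_inv (X₁ X₂ Y₁ Y₂ Z₁ Z₂ : C) :
    (α_ (X₁ ⊗ X₂) (Y₁ ⊗ Y₂) (Z₁ ⊗ Z₂)).inv ≫ tensorμ X₁ X₂ Y₁ Y₂ ▷ (Z₁ ⊗ Z₂) ≫
        tensorμ (X₁ ⊗ Y₁) (X₂ ⊗ Y₂) Z₁ Z₂ =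
      (X₁ ⊗ X₂) ◁ tensorμ Y₁ Y₂ Z₁ Z₂ ≫ tensorμ X₁ X₂ (Y₁ ⊗ Z₁) (Y₂ ⊗ Z₂) ≫
        ((α_ X₁ Y₁ Z₁).inv ⊗ₘ (α_ X₂ Y₂ Z₂).inv) := by
  rw [Iso.inv_comp_eq, ← tensor_associativity_assoc, tensorHom_comp_tensorHom]
  simp

lemma braiding_whiskerRight_comp_braiding_assoc (x y z : C) :
    (α_ z y x).inv ≫ (β_ z y).hom ▷ x ≫ (β_ (y ⊗ z) x).hom ≫ (α_ x y z).inv =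
      z ◁ (β_ y x).hom ≫ (β_ z (x ⊗ y)).hom := by
  rw [braiding_tensor_left_hom, braiding_tensor_right_hom, ← cancel_mono (α_ x y z).hom]
  simp only [Category.assoc, Iso.inv_hom_id, Category.comp_id]
  exact yang_baxter z y x

end General

section Rigid

variable {C : Type*} [Category C] [MonoidalCategory C] [RightRigidCategory C]

lemma gamIso_whiskerRight_comp_evaluation (x y : C) :
    gamIso x y ▷ (x ⊗ y) ≫ ε_ (x ⊗ y) ((x ⊗ y)ᘁ) =
      𝟙 ((yᘁ ⊗ xᘁ) ⊗ (x ⊗ y)) ⊗≫ yᘁ ◁ ε_ x xᘁ ▷ y ⊗≫ ε_ y yᘁ := by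
  calc
    _ = (𝟙 _ ⊗≫ ((yᘁ ⊗ xᘁ) ◁ η_ (x ⊗ y) ((x ⊗ y)ᘁ)) ▷ (x ⊗ y) ⊗≫
        (yᘁ ◁ ε_ x xᘁ ▷ (y ⊗ (x ⊗ y)ᘁ)) ▷ (x ⊗ y) ⊗≫
        (ε_ y yᘁ ▷ ((x ⊗ y)ᘁ ⊗ (x ⊗ y)) ≫ 𝟙_ C ◁ ε_ (x ⊗ y) ((x ⊗ y)ᘁ)) ⊗≫
        𝟙 (𝟙_ C) : (yᘁ ⊗ xᘁ) ⊗ (x ⊗ y) ⟶ 𝟙_ C) := by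
      dsimp only [gamIso]; monoidal
    _ = (𝟙 _ ⊗≫ ((yᘁ ⊗ xᘁ) ◁ η_ (x ⊗ y) ((x ⊗ y)ᘁ)) ▷ (x ⊗ y) ⊗≫
        ((yᘁ ◁ ε_ x xᘁ ▷ y) ▷ ((x ⊗ y)ᘁ ⊗ (x ⊗ y)) ≫
          (yᘁ ⊗ 𝟙_ C ⊗ y) ◁ ε_ (x ⊗ y) ((x ⊗ y)ᘁ)) ⊗≫ ε_ y yᘁ ⊗≫
        𝟙 (𝟙_ C) : (yᘁ ⊗ xᘁ) ⊗ (x ⊗ y) ⟶ 𝟙_ C) := by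
      rw [← whisker_exchange]; monoidal
    _ = (𝟙 _ ⊗≫ (yᘁ ⊗ xᘁ) ◁ (η_ (x ⊗ y) ((x ⊗ y)ᘁ) ▷ (x ⊗ y) ≫ (α_ _ _ _).hom ≫
          (x ⊗ y) ◁ ε_ (x ⊗ y) ((x ⊗ y)ᘁ)) ⊗≫ yᘁ ◁ ε_ x xᘁ ▷ y ⊗≫ ε_ y yᘁ :
          (yᘁ ⊗ xᘁ) ⊗ (x ⊗ y) ⟶ 𝟙_ C) := by
      rw [← whisker_exchange]; monoidal
    _ = _ := by
      rw [ExactPairing.evaluation_coevaluation]; monoidal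

lemma gamIso_whiskerRight_gamIso_comp_evaluation (x y z : C) :
    (gamIso y z ▷ xᘁ ≫ gamIso x (y ⊗ z)) ▷ (x ⊗ (y ⊗ z)) ≫
        ε_ (x ⊗ (y ⊗ z)) ((x ⊗ (y ⊗ z))ᘁ) =
      (𝟙 _ ⊗≫ (zᘁ ⊗ yᘁ) ◁ ε_ x xᘁ ▷ (y ⊗ z) ⊗≫ zᘁ ◁ ε_ y yᘁ ▷ z ⊗≫ ε_ z zᘁ :
        ((zᘁ ⊗ yᘁ) ⊗ xᘁ) ⊗ (x ⊗ (y ⊗ z)) ⟶ 𝟙_ C) := by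
  calc
    _ = (𝟙 _ ⊗≫ (gamIso y z ▷ ((xᘁ ⊗ x) ⊗ (y ⊗ z)) ≫
            (y ⊗ z)ᘁ ◁ (ε_ x xᘁ ▷ (y ⊗ z))) ⊗≫ ε_ (y ⊗ z) ((y ⊗ z)ᘁ) :
          ((zᘁ ⊗ yᘁ) ⊗ xᘁ) ⊗ (x ⊗ (y ⊗ z)) ⟶ 𝟙_ C) := by
      rw [comp_whiskerRight, Category.assoc, gamIso_whiskerRight_comp_evaluation x (y ⊗ z)]
      monoidal
    _ = (𝟙 _ ⊗≫ (zᘁ ⊗ yᘁ) ◁ ε_ x xᘁ ▷ (y ⊗ z) ⊗≫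
            (gamIso y z ▷ (y ⊗ z) ≫ ε_ (y ⊗ z) ((y ⊗ z)ᘁ)) :
          ((zᘁ ⊗ yᘁ) ⊗ xᘁ) ⊗ (x ⊗ (y ⊗ z)) ⟶ 𝟙_ C) := by
      rw [← whisker_exchange]; monoidal
    _ = _ := by
      rw [gamIso_whiskerRight_comp_evaluation y z]; monoidal

lemma whiskerLeft_gamIso_comp_gamIso_comp_evaluation (x y z : C) :
    (zᘁ ◁ gamIso x y ≫ gamIso (x ⊗ y) z) ▷ ((x ⊗ y) ⊗ z) ≫
        ε_ ((x ⊗ y) ⊗ z) (((x ⊗ y) ⊗ z)ᘁ) =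
      (𝟙 _ ⊗≫ (zᘁ ⊗ yᘁ) ◁ ε_ x xᘁ ▷ (y ⊗ z) ⊗≫ zᘁ ◁ ε_ y yᘁ ▷ z ⊗≫ ε_ z zᘁ :
        (zᘁ ⊗ (yᘁ ⊗ xᘁ)) ⊗ ((x ⊗ y) ⊗ z) ⟶ 𝟙_ C) := by
  calc
    _ = (𝟙 _ ⊗≫ zᘁ ◁ ((gamIso x y ▷ (x ⊗ y) ≫ ε_ (x ⊗ y) ((x ⊗ y)ᘁ)) ▷ z) ⊗≫ ε_ z zᘁ :
          (zᘁ ⊗ (yᘁ ⊗ xᘁ)) ⊗ ((x ⊗ y) ⊗ z) ⟶ 𝟙_ C) := by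
      rw [comp_whiskerRight, Category.assoc, gamIso_whiskerRight_comp_evaluation (x ⊗ y) z]
      monoidal
    _ = _ := by
      rw [gamIso_whiskerRight_comp_evaluation x y]; monoidal

lemma gamIso_assoc (x y z : C) :
    (α_ zᘁ yᘁ xᘁ).inv ≫ gamIso y z ▷ xᘁ ≫ gamIso x (y ⊗ z) ≫ ((α_ x y z).hom)ᘁ =
      zᘁ ◁ gamIso x y ≫ gamIso (x ⊗ y) z := by
  apply hom_rightDual_ext
  rw [whiskerLeft_gamIso_comp_gamIso_comp_evaluation]
  calc
    _ = (α_ zᘁ yᘁ xᘁ).inv ▷ _ ≫ ((zᘁ ⊗ yᘁ) ⊗ xᘁ) ◁ (α_ x y z).hom ≫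
        (gamIso y z ▷ xᘁ ≫ gamIso x (y ⊗ z)) ▷ (x ⊗ (y ⊗ z)) ≫
          ε_ (x ⊗ (y ⊗ z)) ((x ⊗ (y ⊗ z))ᘁ) := by
      simp only [comp_whiskerRight, Category.assoc, rightAdjointMate_comp_evaluation,
        whisker_exchange_assoc]
    _ = _ := by
      rw [gamIso_whiskerRight_gamIso_comp_evaluation]; monoidal

end Rigid

lemma GamIso_eq_tensorμ (x y : V) :
    GamIso x y = tensorμ yᘁ y xᘁ x ≫ (gamIso x y ⊗ₘ (β_ y x).hom) := by
  simp only [GamIso, tensorμ, monoidalComp]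
  monoidal

theorem stmt14_general {V : Type u} [Category.{v} V] [MonoidalCategory V] [BraidedCategory V]
    [RightRigidCategory V]
    (x y z : V) :
    (α_ (zᘁ ⊗ z) (yᘁ ⊗ y) (xᘁ ⊗ x)).inv ≫ (GamIso y z ▷ (xᘁ ⊗ x)) ≫
        GamIso x (y ⊗ z) ≫ (((α_ x y z).hom)ᘁ ⊗ₘ (α_ x y z).inv) =
      ((zᘁ ⊗ z) ◁ GamIso x y) ≫ GamIso (x ⊗ y) z := by
  simp only [GamIso_eq_tensorμ, comp_whiskerRight, MonoidalCategory.whiskerLeft_comp,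
    Category.assoc, tensorμ_natural_left_assoc, tensorμ_natural_right_assoc]
  rw [reassoc_of% tensorμ_associativity_inv zᘁ z yᘁ y xᘁ x]
  simp only [tensorHom_comp_tensorHom, gamIso_assoc,
    braiding_whiskerRight_comp_braiding_assoc]

/-- `Γ_{x,y⊗z} ∘ (Γ_{y,z} ⊗ id_{x*⊗x}) = Γ_{x⊗y,z} ∘ (id_{z*⊗z} ⊗ Γ_{x,y})`,
the duals of `x⊗(y⊗z)` and `(x⊗y)⊗z` being identified via the canonical isomorphisms. -/
theorem stmt14 {V : Type u} [Category.{v} V] [MonoidalCategory V] [BraidedCategory V]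
    [RightRigidCategory V]
    (hα : ∀ X Y Z : V, (X ⊗ Y) ⊗ Z = X ⊗ (Y ⊗ Z))
    (hρ : ∀ X : V, X ⊗ 𝟙_ V = X) (hl : ∀ X : V, 𝟙_ V ⊗ X = X)
    (x y z : V) :
    (α_ (zᘁ ⊗ z) (yᘁ ⊗ y) (xᘁ ⊗ x)).inv ≫ (GamIso y z ▷ (xᘁ ⊗ x)) ≫
        GamIso x (y ⊗ z) ≫ (((α_ x y z).hom)ᘁ ⊗ₘ (α_ x y z).inv) =
      ((zᘁ ⊗ z) ◁ GamIso x y) ≫ GamIso (x ⊗ y) z :=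
  stmt14_general x y z
end
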